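/- Let p_t(x | x₀, x₁) = (1 − κ_t) δ_{x₀}(x) + κ_t δ_{x₁}(x) with κ differentiable, κ_t ∈ [0,1), and x₀ ≠ x₁. Then the velocity u_t(x' | x) := (κ̇_t/(1 − κ_t))(δ_{x₁}(x') − δ_x(x')) satisfies the Kolmogorov forward equation d/dt p_t(x') = ∑_x u_t(x' | x) p_t(x) for all x' in the state space, where the sum is over the two-point support {x₀, x₁}. -/

import Mathlib

/-!
Only `κ` depends on time, so `d/dt p_t(x') = κ̇_t (δ_{x₁}(x') - δ_{x₀}(x'))`. On the other side,
`δ_{x₁} - δ_x` vanishes at `x = x₁`, so only the `x₀` term of the sum survives and it equals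
`κ̇_t / (1 - κ_t) · (1 - κ_t) (δ_{x₁}(x') - δ_{x₀}(x'))`; the factor `1 - κ_t` cancels since `κ_t < 1`.
-/

theorem hasDerivAt_one_sub_mul_add_mul {κ : ℝ → ℝ} {κ' t : ℝ} (hκ : HasDerivAt κ κ' t)
    (a b : ℝ) : HasDerivAt (fun s => (1 - κ s) * a + κ s * b) (κ' * (b - a)) t := by
  refine (((hκ.const_sub 1).mul_const a).add (hκ.mul_const b)).congr_deriv ?_
  ring

theorem sum_pair_velocity_mul_interpolant {V : Type*} [DecidableEq V] {x₀ x₁ : V}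
    (hne : x₀ ≠ x₁) (x' : V) (c k : ℝ) :
    ∑ x ∈ ({x₀, x₁} : Finset V),
        c * ((if x' = x₁ then 1 else 0) - (if x' = x then 1 else 0)) *
          ((1 - k) * (if x = x₀ then 1 else 0) + k * (if x = x₁ then 1 else 0)) =
      c * (1 - k) * ((if x' = x₁ then 1 else 0) - (if x' = x₀ then 1 else 0)) := by
  rw [Finset.sum_pair hne]
  simp only [if_neg hne, if_neg hne.symm, if_pos, sub_self]
  ring

/-- The DFM conditional velocity satisfies the Kolmogorov forward equation for the
convex interpolant path conditioned on a fixed pair `(x₀, x₁)` with `x₀ ≠ x₁`. -/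
theorem stmt_19 {V : Type*} [DecidableEq V]
    (x₀ x₁ : V) (hne : x₀ ≠ x₁)
    (κ : ℝ → ℝ) (κdot : ℝ → ℝ) (t : ℝ) (hderiv : HasDerivAt κ (κdot t) t)
    (hκt : κ t ∈ Set.Ico (0:ℝ) 1)
    (p : ℝ → V → ℝ)
    (hp : ∀ s x, p s x =
      (1 - κ s) * (if x = x₀ then 1 else 0) + κ s * (if x = x₁ then 1 else 0))
    (u : V → V → ℝ)
    (hu : ∀ x' x, u x' x =
      (κdot t / (1 - κ t)) * ((if x' = x₁ then 1 else 0) - (if x' = x then 1 else 0))) :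
    ∀ x', HasDerivAt (fun s => p s x') (∑ x ∈ ({x₀, x₁} : Finset V), u x' x * p t x) t := by
  obtain rfl : p = _ := funext fun s => funext (hp s)
  obtain rfl : u = _ := funext fun x' => funext (hu x')
  intro x'
  have hκt_one_sub : 1 - κ t ≠ 0 := sub_ne_zero.mpr hκt.2.ne'
  rw [sum_pair_velocity_mul_interpolant hne, div_mul_cancel₀ _ hκt_one_sub]
  exact hasDerivAt_one_sub_mul_add_mul hderiv _ _
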